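/- Let b, c ∈ ℝ with b ≠ 0 and b² + c² = 1, set β = (0, b, c), and let α = (x, y, z) : ℝ → ℝ³ be twice differentiable with ‖α'(u)‖ = 1, ⟨α'(u), β⟩ = 0, and ⟨α'(u) × β, α''(u)⟩ = ⟨α'(u) × β, e₃⟩ for all u ∈ ℝ. Then either α'' ≡ 0 (so α is a straight line and the ruled surface X(u,v) = α(u) + v·β is a plane parallel to the z-axis), or there exist A > 0, ε ∈ {−1, 1}, and constants x₀, y₀, z₀ ∈ ℝ such that for all u ∈ ℝ: z(u) = log(e^{−bu} + A·e^{bu}) + z₀, x(u) = ε·(2/b)·arctan(√A·e^{bu}) + x₀, and y(u) = −(c/b)·(z(u) − z₀) + y₀. -/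

import Mathlib

noncomputable section
open scoped RealInnerProductSpace

/-- ℝ³ with its standard inner product structure. -/
abbrev R3 : Type := EuclideanSpace ℝ (Fin 3)

/-- The cross product on ℝ³. -/
def cross (v w : R3) : R3 :=
  (WithLp.equiv 2 (Fin 3 → ℝ)).symm
    ![v 1 * w 2 - v 2 * w 1, v 2 * w 0 - v 0 * w 2, v 0 * w 1 - v 1 * w 0]

/-- The vector e₃ = (0,0,1). -/
def e3 : R3 := (WithLp.equiv 2 (Fin 3 → ℝ)).symm ![0, 0, 1]

/-!
Write `α' = (X, Y, Z)`. Orthogonality to `β` gives `Y = -(c/b) Z`, so unit speed reads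
`b² X² + Z² = b²`, and with `⟨α', α''⟩ = 0` the minimal surface equation becomes the Riccati
equation `Z' = b² - Z²` for `Z = z'`. Its first integrals `(b ∓ Z) e^{z ± bu}` give
`2b e^z = P e^{-bu} + Q e^{bu}`, and if `X` is nonzero at one point then `bP, bQ > 0`, so
`z = log (e^{-bu} + A e^{bu}) + z₀` with `A = Q/P`. Then `b² X² = b² - Z²` forces
`X = ±2√A / (e^{-bu} + A e^{bu})` with a global sign by connectedness, and this integrates to the
arctangent. If `X` vanishes identically, `Z² = b²`, so `Z' = 0` and `α'' = 0`.
-/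

open Real

theorem eq_of_hasDerivAt_eq_zero {f : ℝ → ℝ} (hf : ∀ u, HasDerivAt f 0 u) (u v : ℝ) :
    f u = f v :=
  is_const_of_deriv_eq_zero (fun t => (hf t).differentiableAt) (fun t => (hf t).deriv) u v

theorem exists_sign_mul_of_sq_eq {T : Type*} [TopologicalSpace T] [PreconnectedSpace T]
    {f g : T → ℝ} (hf : Continuous f) (hg : Continuous g) (hg0 : ∀ u, g u ≠ 0)
    (hsq : ∀ u, f u ^ 2 = g u ^ 2) : ∃ ε : ℝ, (ε = 1 ∨ ε = -1) ∧ ∀ u, f u = ε * g u := by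
  rcases isPreconnected_univ.eq_or_eq_neg_of_sq_eq hf.continuousOn hg.continuousOn
    (fun u _ => hsq u) (fun _ => hg0 _) with h | h
  · exact ⟨1, Or.inl rfl, fun u => (h (Set.mem_univ u)).trans (one_mul _).symm⟩
  · exact ⟨-1, Or.inr rfl, fun u => (h (Set.mem_univ u)).trans (neg_one_mul _).symm⟩

theorem HasDerivAt.euclideanSpace_apply {ι : Type*} [Fintype ι] {f : ℝ → EuclideanSpace ℝ ι}
    {f' : EuclideanSpace ℝ ι} {u : ℝ} (h : HasDerivAt f f' u) (i : ι) :
    HasDerivAt (fun t => f t i) (f' i) u :=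
  (EuclideanSpace.proj (𝕜 := ℝ) i).hasFDerivAt.comp_hasDerivAt u h

section InnerProductSpace

variable {E : Type*} [NormedAddCommGroup E] [InnerProductSpace ℝ E] {f : ℝ → E} {f' : E} {u : ℝ}

theorem HasDerivAt.inner_deriv_eq_zero_of_norm_eq {r : ℝ} (hf : HasDerivAt f f' u)
    (h : ∀ t, ‖f t‖ = r) : ⟪f u, f'⟫ = 0 := by
  have hconst : HasDerivAt (fun t => ⟪f t, f t⟫) 0 u := by
    simp only [real_inner_self_eq_norm_sq, h]
    exact hasDerivAt_const u _
  have h2 := (hf.inner ℝ hf).unique hconst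
  linarith [real_inner_comm (f u) f']

theorem HasDerivAt.inner_deriv_eq_zero_of_inner_eq {v : E} {r : ℝ} (hf : HasDerivAt f f' u)
    (h : ∀ t, ⟪f t, v⟫ = r) : ⟪f', v⟫ = 0 := by
  have hconst : HasDerivAt (fun t => ⟪f t, v⟫) 0 u := by
    simp only [h]
    exact hasDerivAt_const u _
  simpa using (hf.inner ℝ (hasDerivAt_const u v)).unique hconst

end InnerProductSpace

section ExplicitSolution

variable {b A : ℝ}

theorem hasDerivAt_exp_mul (b u : ℝ) : HasDerivAt (fun u => exp (b * u)) (b * exp (b * u)) u := by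
  simpa [mul_comm] using ((hasDerivAt_id u).const_mul b).exp

theorem hasDerivAt_log_exp_neg_add_mul_exp (hA : 0 ≤ A) (u : ℝ) :
    HasDerivAt (fun u => log (exp (-(b * u)) + A * exp (b * u)))
      (b * (A * exp (b * u) - exp (-(b * u))) / (exp (-(b * u)) + A * exp (b * u))) u := by
  have hD : exp (-(b * u)) + A * exp (b * u) ≠ 0 := by positivity
  have h := ((hasDerivAt_exp_mul (-b) u).add ((hasDerivAt_exp_mul b u).const_mul A)).log
  simp only [neg_mul, Pi.add_apply] at h
  exact (h hD).congr_deriv (by ring)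

theorem hasDerivAt_arctan_sqrt_mul_exp (hb : b ≠ 0) (hA : 0 ≤ A) (u : ℝ) :
    HasDerivAt (fun u => 2 / b * arctan (sqrt A * exp (b * u)))
      (2 * sqrt A / (exp (-(b * u)) + A * exp (b * u))) u := by
  have h := (((hasDerivAt_exp_mul b u).const_mul (sqrt A)).arctan).const_mul (2 / b)
  refine h.congr_deriv ?_
  rw [mul_pow, sq_sqrt hA, exp_neg]
  field_simp

theorem sq_sub_sq_deriv_log_exp_neg_add_mul_exp (hA : 0 ≤ A) (u : ℝ) :
    b ^ 2 - (b * (A * exp (b * u) - exp (-(b * u))) / (exp (-(b * u)) + A * exp (b * u))) ^ 2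
      = b ^ 2 * (2 * sqrt A / (exp (-(b * u)) + A * exp (b * u))) ^ 2 := by
  have hD : exp (-(b * u)) + A * exp (b * u) ≠ 0 := by positivity
  have h1 : exp (-(b * u)) * exp (b * u) = 1 := by rw [← exp_add, neg_add_cancel, exp_zero]
  field_simp
  rw [sq_sqrt hA]
  linear_combination (4 * A * b ^ 2) * h1

end ExplicitSolution

section Riccati

variable {b : ℝ} {z Z : ℝ → ℝ}

theorem riccati_first_integral (hz : ∀ u, HasDerivAt z (Z u) u)
    (hZ : ∀ u, HasDerivAt Z (b ^ 2 - Z u ^ 2) u) :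
    ∃ P, ∀ u, (b - Z u) * exp (z u) = P * exp (-(b * u)) := by
  have hderiv (t : ℝ) : HasDerivAt (fun t => (b - Z t) * exp (z t + b * t)) 0 t :=
    (((hZ t).const_sub b).mul (((hz t).add ((hasDerivAt_id t).const_mul b)).exp)).congr_deriv
      (by simp only [Pi.add_apply, id]; ring)
  refine ⟨(b - Z 0) * exp (z 0), fun u => ?_⟩
  calc (b - Z u) * exp (z u) = (b - Z u) * exp (z u + b * u) * exp (-(b * u)) := by
        rw [mul_assoc, ← exp_add, add_neg_cancel_right]
    _ = _ := by rw [eq_of_hasDerivAt_eq_zero hderiv u 0, mul_zero, add_zero]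

theorem riccati_log_solution (hb : b ≠ 0) (hz : ∀ u, HasDerivAt z (Z u) u)
    (hZ : ∀ u, HasDerivAt Z (b ^ 2 - Z u ^ 2) u) {u₀ : ℝ} (hu₀ : Z u₀ ^ 2 < b ^ 2) :
    ∃ A > 0, ∃ z₀ : ℝ, ∀ u, z u = log (exp (-(b * u)) + A * exp (b * u)) + z₀ := by
  obtain ⟨P, hP⟩ := riccati_first_integral hz hZ
  obtain ⟨Q, hQ⟩ := riccati_first_integral (b := -b) hz (by simpa only [neg_sq] using hZ)
  replace hQ : ∀ u, (b + Z u) * exp (z u) = -Q * exp (b * u) := fun u => by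
    have h := hQ u
    rw [neg_mul, neg_neg] at h
    linear_combination -h
  have hbP : 0 < b * P := by
    have : 0 < b * (b - Z u₀) := by nlinarith
    refine (mul_pos_iff_of_pos_right (exp_pos (-(b * u₀)))).1 ?_
    rw [mul_assoc, ← hP u₀, ← mul_assoc]
    exact mul_pos this (exp_pos _)
  have hbQ : 0 < b * -Q := by
    have : 0 < b * (b + Z u₀) := by nlinarith
    refine (mul_pos_iff_of_pos_right (exp_pos (b * u₀))).1 ?_
    rw [mul_assoc, ← hQ u₀, ← mul_assoc]
    exact mul_pos this (exp_pos _)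
  have hP0 : P ≠ 0 := right_ne_zero_of_mul hbP.ne'
  have hA : 0 < -Q / P := by
    rw [← mul_div_mul_left (-Q) P hb]
    exact div_pos hbQ hbP
  have hC : 0 < P / (2 * b) := by
    rw [← mul_div_mul_left P (2 * b) hb]
    exact div_pos hbP (by nlinarith [mul_self_pos.2 hb])
  refine ⟨-Q / P, hA, log (P / (2 * b)), fun u => ?_⟩
  have hexp : exp (z u) = P / (2 * b) * (exp (-(b * u)) + -Q / P * exp (b * u)) := by
    field_simp
    linear_combination hP u + hQ u
  rw [← log_exp (z u), hexp, log_mul hC.ne' (by positivity), add_comm]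

theorem riccati_classification (hb : b ≠ 0) {x X : ℝ → ℝ} (hx : ∀ u, HasDerivAt x (X u) u)
    (hz : ∀ u, HasDerivAt z (Z u) u) (hZ : ∀ u, HasDerivAt Z (b ^ 2 - Z u ^ 2) u)
    (hX : Continuous X) (hXZ : ∀ u, b ^ 2 * X u ^ 2 + Z u ^ 2 = b ^ 2) :
    (∀ u, X u = 0) ∨ ∃ A > 0, ∃ ε : ℝ, (ε = 1 ∨ ε = -1) ∧ ∃ x₀ z₀ : ℝ, ∀ u,
      z u = log (exp (-(b * u)) + A * exp (b * u)) + z₀ ∧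
      x u = ε * (2 / b) * arctan (sqrt A * exp (b * u)) + x₀ := by
  obtain hX0 | ⟨u₀, hu₀⟩ := forall_or_exists_not (fun u => X u = 0)
  · exact Or.inl hX0
  obtain ⟨A, hA, z₀, hzA⟩ := riccati_log_solution hb hz hZ (u₀ := u₀)
    (by linarith [hXZ u₀, mul_pos (sq_pos_of_ne_zero hb) (sq_pos_of_ne_zero hu₀)])
  have hZA (u : ℝ) :
      Z u = b * (A * exp (b * u) - exp (-(b * u))) / (exp (-(b * u)) + A * exp (b * u)) :=
    (hz u).unique <| by
      rw [show z = _ from funext hzA]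
      exact (hasDerivAt_log_exp_neg_add_mul_exp hA.le u).add_const z₀
  set g : ℝ → ℝ := fun u => 2 * sqrt A / (exp (-(b * u)) + A * exp (b * u))
  have hg : Continuous g := by fun_prop (disch := intro u; positivity)
  obtain ⟨ε, hε, hXg⟩ := exists_sign_mul_of_sq_eq hX hg (fun u => by positivity) fun u => by
    have h := eq_sub_of_add_eq (hXZ u)
    rw [hZA u, sq_sub_sq_deriv_log_exp_neg_add_mul_exp hA.le] at h
    exact mul_left_cancel₀ (pow_ne_zero 2 hb) h
  refine Or.inr ⟨A, hA, ε, hε, x 0 - ε * (2 / b) * arctan (sqrt A * exp (b * 0)), z₀,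
    fun u => ⟨hzA u, ?_⟩⟩
  have h := eq_of_hasDerivAt_eq_zero
    (f := fun u => x u - ε * (2 / b * arctan (sqrt A * exp (b * u))))
    (fun u => ((hx u).sub ((hasDerivAt_arctan_sqrt_mul_exp hb hA.le u).const_mul ε)).congr_deriv
      (by rw [hXg u, sub_self])) u 0
  linear_combination h

end Riccati

theorem inner_R3_eq_sum (v w : R3) : ⟪v, w⟫ = v 0 * w 0 + v 1 * w 1 + v 2 * w 2 := by
  simp only [PiLp.inner_apply, Fin.sum_univ_three, RCLike.inner_apply, conj_trivial]
  ring

theorem inner_zero_cons_eq (v : R3) (b c : ℝ) :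
    ⟪v, (WithLp.equiv 2 (Fin 3 → ℝ)).symm ![0, b, c]⟫ = b * v 1 + c * v 2 := by
  simp [inner_R3_eq_sum, mul_comm]

theorem riccati_of_cylindrical_minimal {b c : ℝ} (hb : b ≠ 0) (hbc : b ^ 2 + c ^ 2 = 1)
    {v a : ℝ → R3} (hv : ∀ u, HasDerivAt v (a u) u) (hspeed : ∀ u, ‖v u‖ = 1)
    (horth : ∀ u, ⟪v u, (WithLp.equiv 2 (Fin 3 → ℝ)).symm ![0, b, c]⟫ = 0)
    (hmin : ∀ u, ⟪cross (v u) ((WithLp.equiv 2 (Fin 3 → ℝ)).symm ![0, b, c]), a u⟫ =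
      ⟪cross (v u) ((WithLp.equiv 2 (Fin 3 → ℝ)).symm ![0, b, c]), e3⟫) (u : ℝ) :
    b ^ 2 * v u 0 ^ 2 + v u 2 ^ 2 = b ^ 2 ∧ a u 2 = b ^ 2 - v u 2 ^ 2 ∧
      b * a u 1 + c * a u 2 = 0 := by
  have hvv : v u 0 ^ 2 + v u 1 ^ 2 + v u 2 ^ 2 = 1 := by
    have h := real_inner_self_eq_norm_sq (v u)
    rw [hspeed u, inner_R3_eq_sum] at h
    linear_combination h
  have hva : v u 0 * a u 0 + v u 1 * a u 1 + v u 2 * a u 2 = 0 := by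
    rw [← inner_R3_eq_sum]; exact (hv u).inner_deriv_eq_zero_of_norm_eq hspeed
  have hvβ : b * v u 1 + c * v u 2 = 0 := by rw [← inner_zero_cons_eq]; exact horth u
  have haβ : b * a u 1 + c * a u 2 = 0 := by
    rw [← inner_zero_cons_eq]; exact (hv u).inner_deriv_eq_zero_of_inner_eq horth
  have hm := hmin u
  simp only [cross, e3, inner_R3_eq_sum, Fin.isValue, WithLp.equiv_symm_apply, Matrix.cons_val,
    Matrix.cons_val_one, Matrix.cons_val_zero, mul_zero, zero_sub, sub_zero, neg_mul, add_zero,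
    mul_one, zero_add] at hm
  have hnorm : b ^ 2 * v u 0 ^ 2 + v u 2 ^ 2 = b ^ 2 := by
    linear_combination b ^ 2 * hvv + (c * v u 2 - b * v u 1) * hvβ - v u 2 ^ 2 * hbc
  have hwronski : v u 0 * a u 2 - v u 2 * a u 0 = b ^ 2 * v u 0 := by
    linear_combination b * hm - c * a u 0 * hvβ + c * v u 0 * haβ -
      (v u 0 * a u 2 - v u 2 * a u 0) * hbc
  have hva' : b ^ 2 * v u 0 * a u 0 + v u 2 * a u 2 = 0 := by
    linear_combination b ^ 2 * hva - b * a u 1 * hvβ + c * v u 2 * haβ - v u 2 * a u 2 * hbc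
  refine ⟨hnorm, mul_right_cancel₀ (pow_ne_zero 2 hb) ?_, haβ⟩
  linear_combination v u 0 * b ^ 2 * hwronski + v u 2 * hva' + (b ^ 2 - a u 2) * hnorm

/-- Theorem 1 (uniqueness part): with β = (0, b, c), the cylindrical ruled minimal
surfaces in ℝ³ with density e^z are planes parallel to the z-axis or the
surfaces (17). -/
theorem cylindrical_ruled_minimal_classification
    (b c : ℝ) (hb : b ≠ 0) (hbc : b ^ 2 + c ^ 2 = 1)
    (x y z : ℝ → ℝ) (α : ℝ → R3)
    (hαdef : ∀ u, α u = (WithLp.equiv 2 (Fin 3 → ℝ)).symm ![x u, y u, z u])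
    (β : R3) (hβ : β = (WithLp.equiv 2 (Fin 3 → ℝ)).symm ![0, b, c])
    (hα : ContDiff ℝ 2 α)
    (hspeed : ∀ u, ‖deriv α u‖ = 1)
    (horth : ∀ u, ⟪deriv α u, β⟫ = 0)
    (hmin : ∀ u, ⟪cross (deriv α u) β, deriv (deriv α) u⟫ = ⟪cross (deriv α u) β, e3⟫) :
    (∀ u, deriv (deriv α) u = 0) ∨
      ∃ A > 0, ∃ ε : ℝ, (ε = 1 ∨ ε = -1) ∧ ∃ x₀ y₀ z₀ : ℝ, ∀ u : ℝ,
        z u = Real.log (Real.exp (-(b * u)) + A * Real.exp (b * u)) + z₀ ∧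
        x u = ε * (2 / b) * Real.arctan (Real.sqrt A * Real.exp (b * u)) + x₀ ∧
        y u = -(c / b) * (z u - z₀) + y₀ := by
  subst hβ
  have hα'' (u : ℝ) : HasDerivAt (deriv α) (deriv (deriv α) u) u :=
    (hα.differentiable_deriv_two u).hasDerivAt
  have hcoord (i : Fin 3) (u : ℝ) : HasDerivAt (fun t => ![x t, y t, z t] i) (deriv α u i) u := by
    simpa [hαdef] using (hα.differentiable two_ne_zero u).hasDerivAt.euclideanSpace_apply i
  have hode := riccati_of_cylindrical_minimal hb hbc hα'' hspeed horth hmin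
  rcases riccati_classification hb (hcoord 0) (hcoord 2)
    (fun u => (hode u).2.1 ▸ (hα'' u).euclideanSpace_apply 2)
    (continuous_iff_continuousAt.2 fun u => ((hα'' u).euclideanSpace_apply 0).continuousAt)
    (fun u => (hode u).1) with hX | ⟨A, hA, ε, hε, x₀, z₀, hsol⟩
  · refine Or.inl fun u => ?_
    obtain ⟨hnorm, ha2, haβ⟩ := hode u
    rw [hX u] at hnorm
    have ha0 : deriv (deriv α) u 0 = 0 := ((hα'' u).euclideanSpace_apply 0).unique <| by
      simp only [hX]; exact hasDerivAt_const u 0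
    replace ha2 : deriv (deriv α) u 2 = 0 := by linear_combination ha2 - hnorm
    have ha1 : deriv (deriv α) u 1 = 0 := by simpa [ha2, hb] using haβ
    ext i
    fin_cases i <;> simp [ha0, ha1, ha2]
  · refine Or.inr ⟨A, hA, ε, hε, x₀, y 0 + c / b * (z 0 - z₀), z₀,
      fun u => ⟨(hsol u).1, (hsol u).2, ?_⟩⟩
    have h := eq_of_hasDerivAt_eq_zero (f := fun u => y u + c / b * z u)
      (fun u => ((hcoord 1 u).add ((hcoord 2 u).const_mul (c / b))).congr_deriv
        (by field_simp; linear_combination (inner_zero_cons_eq _ b c).symm.trans (horth u))) u 0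
    linear_combination h
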